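/- Let G = (V, E) be a finite undirected graph, let c > 0, and for each i ∈ V let d_i denote the degree of node i and N_i its neighbor set; let A_{ij} ∈ {−1,1} with A_{ji} = −A_{ij} for each edge, and let s : V → ℝ. Suppose sequences (x_i^{(t)})_{t≥0}, (z_{i|j}^{(t)})_{t≥0} for all directed edges, and (z_{i|i'}^{(t)})_{t≥0} for all dummy edges satisfy, for all t ≥ 0 and all nodes i, j: the primal update x_i^{(t+1)} = ( −1 − Σ_{k ∈ N_i} A_{ik} z_{i|k}^{(t)} + z_{i|i'}^{(t)} + (1/2) c s_i ) / ( c (d_i + 1) ), and the regular-edge update z_{j|i}^{(t+1)} = (1/2) z_{j|i}^{(t)} + (1/2)( z_{i|j}^{(t)} + 2 c A_{ij} x_i^{(t+1)} ). Then for every node j and every t ≥ 1, x_j^{(t+2)} − x_j^{(t+1)} = [ c Σ_{k ∈ N_j} ( x_k^{(t+1)} − (1/2) x_k^{(t)} − (1/2) x_j^{(t)} ) + ( z_{j|j'}^{(t+1)} − z_{j|j'}^{(t)} ) ] / ( c (d_j + 1) ). -/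

import Mathlib

/-!
Substituting the primal update at times `t + 1` and `t + 2` reduces the claim to computing
`A_{jk} (z_{j|k}^{(t+1)} - z_{j|k}^{(t)})` on each edge. Two applications of the auxiliary update
show that `z_{k|j} - z_{j|k}` is determined by the current primal iterates, which turns that
difference into `-c A_{jk}² (x_k^{(t+1)} - x_k^{(t)}/2 - x_j^{(t)}/2)`, and `A_{jk}² = 1`.
-/

open Finset

namespace SimpleGraph

variable {V : Type*} (G : SimpleGraph V)

/-- The regular-edge auxiliary update of IEQ-PDMM with `θ = 1/2`; `z j i t` stands for
`z_{j|i}^{(t)}`. -/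
def IsAuxUpdate (c : ℝ) (A : V → V → ℝ) (x : V → ℕ → ℝ) (z : V → V → ℕ → ℝ) : Prop :=
  ∀ (i j : V) (t : ℕ), G.Adj i j →
    z j i (t + 1) = 1 / 2 * z j i t + 1 / 2 * (z i j t + 2 * c * A i j * x i (t + 1))

namespace IsAuxUpdate

variable {G} {c : ℝ} {A : V → V → ℝ} {x : V → ℕ → ℝ} {z : V → V → ℕ → ℝ}

theorem sub_swap (hz : G.IsAuxUpdate c A x z) (hA : ∀ i j, G.Adj i j → A j i = -A i j)
    {j k : V} (hjk : G.Adj j k) (t : ℕ) :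
    z k j (t + 1) - z j k (t + 1) = c * A j k * (x j (t + 1) + x k (t + 1)) := by
  rw [hz j k t hjk, hz k j t hjk.symm, hA j k hjk]
  ring

theorem sub_succ (hz : G.IsAuxUpdate c A x z) (hA : ∀ i j, G.Adj i j → A j i = -A i j)
    {j k : V} (hjk : G.Adj j k) (t : ℕ) :
    z j k (t + 2) - z j k (t + 1) =
      -(c * A j k * (x k (t + 2) - 1 / 2 * x k (t + 1) - 1 / 2 * x j (t + 1))) := by
  have hswap := hz.sub_swap hA hjk t
  rw [hz k j (t + 1) hjk.symm, hA j k hjk]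
  linear_combination 1 / 2 * hswap

theorem mul_sub_succ (hz : G.IsAuxUpdate c A x z) (hA : ∀ i j, G.Adj i j → A j i = -A i j)
    {j k : V} (hjk : G.Adj j k) (hsign : A j k = 1 ∨ A j k = -1) (t : ℕ) :
    A j k * z j k (t + 2) - A j k * z j k (t + 1) =
      -(c * (x k (t + 2) - 1 / 2 * x k (t + 1) - 1 / 2 * x j (t + 1))) := by
  have hsq : A j k * A j k = 1 := mul_self_eq_one_iff.mpr hsign
  linear_combination A j k * hz.sub_succ hA hjk t -
    c * (x k (t + 2) - 1 / 2 * x k (t + 1) - 1 / 2 * x j (t + 1)) * hsq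

end IsAuxUpdate

end SimpleGraph

theorem pdmm_primal_successive_differences_general
    {V : Type*} [Fintype V]
    (G : SimpleGraph V) [DecidableRel G.Adj]
    (c : ℝ) (s : V → ℝ) (A : V → V → ℝ)
    (hA1 : ∀ i j : V, G.Adj i j → A i j = 1 ∨ A i j = -1)
    (hA2 : ∀ i j : V, G.Adj i j → A j i = -A i j)
    (x : V → ℕ → ℝ) (z : V → V → ℕ → ℝ) (zd : V → ℕ → ℝ)
    (hx : ∀ (i : V) (t : ℕ),
      x i (t + 1) =
        (-1 - (∑ k ∈ G.neighborFinset i, A i k * z i k t) + zd i t + 1 / 2 * c * s i) /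
          (c * (G.degree i + 1)))
    (hz : ∀ (i j : V) (t : ℕ), G.Adj i j →
      z j i (t + 1) = 1 / 2 * z j i t + 1 / 2 * (z i j t + 2 * c * A i j * x i (t + 1))) :
    ∀ (j : V) (t : ℕ), 1 ≤ t →
      x j (t + 2) - x j (t + 1) =
        (c * (∑ k ∈ G.neighborFinset j, (x k (t + 1) - 1 / 2 * x k t - 1 / 2 * x j t)) +
            (zd j (t + 1) - zd j t)) /
          (c * (G.degree j + 1)) := by
  intro j t ht
  obtain ⟨n, rfl⟩ := Nat.exists_eq_add_of_le' ht
  have hsum : (∑ k ∈ G.neighborFinset j, A j k * z j k (n + 2)) -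
      ∑ k ∈ G.neighborFinset j, A j k * z j k (n + 1) =
        -(c * ∑ k ∈ G.neighborFinset j,
          (x k (n + 2) - 1 / 2 * x k (n + 1) - 1 / 2 * x j (n + 1))) := by
    rw [← sum_sub_distrib, mul_sum, ← sum_neg_distrib]
    refine sum_congr rfl fun k hk => ?_
    rw [G.mem_neighborFinset] at hk
    exact SimpleGraph.IsAuxUpdate.mul_sub_succ hz hA2 hk (hA1 j k hk) n
  rw [hx j (n + 2), hx j (n + 1), div_sub_div_same]
  congr 1
  linear_combination -hsum

/-- eq. (11) in the paper: on the augmented graph, under the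
IEQ-PDMM primal update
`x_i^{(t+1)} = (−1 − ∑_{k∈N_i} A_{ik} z_{i|k}^{(t)} + z_{i|i'}^{(t)} + (1/2) c s_i)/(c (d_i + 1))`
and the regular-edge auxiliary update
`z_{j|i}^{(t+1)} = (1/2) z_{j|i}^{(t)} + (1/2)(z_{i|j}^{(t)} + 2 c A_{ij} x_i^{(t+1)})`,
for every node `j` and every `t ≥ 1`,
`x_j^{(t+2)} − x_j^{(t+1)} = (c ∑_{k∈N_j} (x_k^{(t+1)} − (1/2) x_k^{(t)} − (1/2) x_j^{(t)})
  + (z_{j|j'}^{(t+1)} − z_{j|j'}^{(t)})) / (c (d_j + 1))`. -/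
theorem pdmm_primal_successive_differences
    {V : Type*} [Fintype V] [DecidableEq V]
    (G : SimpleGraph V) [DecidableRel G.Adj]
    (c : ℝ) (hc : 0 < c) (s : V → ℝ) (A : V → V → ℝ)
    (hA1 : ∀ i j : V, G.Adj i j → A i j = 1 ∨ A i j = -1)
    (hA2 : ∀ i j : V, G.Adj i j → A j i = -A i j)
    (x : V → ℕ → ℝ) (z : V → V → ℕ → ℝ) (zd : V → ℕ → ℝ)
    (hx : ∀ (i : V) (t : ℕ),
      x i (t + 1) =
        (-1 - (∑ k ∈ G.neighborFinset i, A i k * z i k t) + zd i t + 1 / 2 * c * s i) /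
          (c * (G.degree i + 1)))
    (hz : ∀ (i j : V) (t : ℕ), G.Adj i j →
      z j i (t + 1) = 1 / 2 * z j i t + 1 / 2 * (z i j t + 2 * c * A i j * x i (t + 1))) :
    ∀ (j : V) (t : ℕ), 1 ≤ t →
      x j (t + 2) - x j (t + 1) =
        (c * (∑ k ∈ G.neighborFinset j, (x k (t + 1) - 1 / 2 * x k t - 1 / 2 * x j t)) +
            (zd j (t + 1) - zd j t)) /
          (c * (G.degree j + 1)) :=
  pdmm_primal_successive_differences_general G c s A hA1 hA2 x z zd hx hz
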